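/- Let 2 < θ ≤ 3. Then ∫_ℝ 12π²·(θ−1)²·C(θ)·k² / (576π⁴·|k|^{7−θ} + (θ−1)²·C(θ)) dk = (24π³/(7−θ))·csc((4−θ)π/(7−θ))·((θ−1)/(24π²))^{6/(7−θ)}·C(θ)^{3/(7−θ)} (the integral converges absolutely since the integrand decays like |k|^{θ−5} at infinity). -/

import Mathlib

/-!
Write the integrand as `12 π² A · |k|² / (b |k|^p + A)` with `p = 7 - θ`, `b = 576 π⁴` and
`A = (θ - 1)² C(θ) > 0`. By evenness and the substitution `y = k^p` on `(0, ∞)`, the integral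
becomes a multiple of `∫₀^∞ y^(a-1) / (b y + A) dy` with `a = 3 / p ∈ (0, 1)`, and
`t = b y / (b y + A)` turns that into `(A / b)^a / A` times the Beta integral
`B(a, 1 - a) = π / sin (π a)` (Euler's reflection formula). Finally
`sin ((4 - θ) π / p) = sin (π - 3 π / p) = sin (3 π / p)`.
-/

noncomputable section
open Real MeasureTheory

/-- `C(θ) = 4 π^{θ-1} ∫₀^∞ sin²(y)/y^θ dy` for `1 < θ < 3` and `C(3) = 4π²`. -/
def Cθ (θ : ℝ) : ℝ :=
  if θ < 3 then 4 * π ^ (θ - 1) * ∫ y in Set.Ioi (0 : ℝ), sin y ^ 2 / y ^ θ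
  else 4 * π ^ (2 : ℕ)

open Set

lemma Complex.betaIntegral_one_sub {a : ℂ} (ha₀ : 0 < a.re) (ha₁ : a.re < 1) :
    betaIntegral a (1 - a) = π / sin (π * a) := by
  have h := Gamma_mul_Gamma_eq_betaIntegral ha₀ (by simpa using ha₁ : 0 < (1 - a).re)
  rwa [add_sub_cancel, Gamma_one, one_mul, Gamma_mul_Gamma_one_sub, eq_comm] at h

lemma ofReal_rpow_mul_one_sub_rpow {t : ℝ} (ht : t ∈ Ioo (0 : ℝ) 1) (u v : ℝ) :
    ((t ^ (u - 1) * (1 - t) ^ (v - 1) : ℝ) : ℂ)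
      = (t : ℂ) ^ ((u : ℂ) - 1) * (1 - t) ^ ((v : ℂ) - 1) := by
  rw [Complex.ofReal_mul, Complex.ofReal_cpow ht.1.le, Complex.ofReal_cpow (by linarith [ht.2])]
  push_cast
  rfl

lemma ofReal_integral_Ioo_rpow_mul_one_sub_rpow (u v : ℝ) :
    ((∫ t in Ioo (0 : ℝ) 1, t ^ (u - 1) * (1 - t) ^ (v - 1) : ℝ) : ℂ)
      = Complex.betaIntegral u v := by
  rw [Complex.betaIntegral, intervalIntegral.integral_of_le zero_le_one,
    integral_Ioc_eq_integral_Ioo, ← integral_complex_ofReal]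
  exact setIntegral_congr_fun measurableSet_Ioo fun t ht => ofReal_rpow_mul_one_sub_rpow ht u v

lemma integrableOn_Ioo_rpow_mul_one_sub_rpow {u v : ℝ} (hu : 0 < u) (hv : 0 < v) :
    IntegrableOn (fun t : ℝ => t ^ (u - 1) * (1 - t) ^ (v - 1)) (Ioo 0 1) := by
  have h := (Complex.betaIntegral_convergent (u := u) (v := v) (by simpa) (by simpa)).1
  refine IntegrableOn.congr_fun (h.mono_set Ioo_subset_Ioc_self).re (fun t ht => ?_)
    measurableSet_Ioo
  rw [← ofReal_rpow_mul_one_sub_rpow ht]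
  rfl

lemma integral_Ioo_rpow_mul_one_sub_rpow_one_sub {a : ℝ} (ha₀ : 0 < a) (ha₁ : a < 1) :
    ∫ t in Ioo (0 : ℝ) 1, t ^ (a - 1) * (1 - t) ^ (1 - a - 1) = π / sin (π * a) := by
  have h := ofReal_integral_Ioo_rpow_mul_one_sub_rpow a (1 - a)
  rw [Complex.ofReal_sub, Complex.ofReal_one,
    Complex.betaIntegral_one_sub (by simpa) (by simpa)] at h
  exact_mod_cast h

section
variable {b A : ℝ} (hb : 0 < b) (hA : 0 < A)
include hb hA

lemma image_Ioi_mul_div_mul_add :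
    (fun y => b * y / (b * y + A)) '' Ioi 0 = Ioo 0 1 := by
  ext t
  constructor
  · rintro ⟨y, hy, rfl⟩
    have hy : 0 < b * y := mul_pos hb hy
    exact ⟨by positivity, (div_lt_one (by positivity)).2 (by linarith)⟩
  · rintro ⟨ht₀, ht₁⟩
    have h1t : 0 < 1 - t := sub_pos.2 ht₁
    refine ⟨A * t / (b * (1 - t)), mem_Ioi.2 (by positivity), ?_⟩
    field_simp
    ring

lemma strictMonoOn_mul_div_mul_add :
    StrictMonoOn (fun y => b * y / (b * y + A)) (Ioi 0) := by
  intro x hx y hy hxy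
  have hx : 0 < b * x := mul_pos hb hx
  have hy : 0 < b * y := mul_pos hb hy
  rw [div_lt_div_iff₀ (by positivity) (by positivity)]
  nlinarith [mul_pos (mul_pos hb hA) (sub_pos.2 hxy)]

lemma hasDerivAt_mul_div_mul_add {y : ℝ} (hy : 0 < y) :
    HasDerivAt (fun y => b * y / (b * y + A)) (b * A / (b * y + A) ^ 2) y := by
  have hD : b * y + A ≠ 0 := by positivity
  refine (((hasDerivAt_id' y).const_mul b).fun_div
    (((hasDerivAt_id' y).const_mul b).add_const A) hD).congr_deriv ?_
  ring

lemma abs_deriv_smul_beta_comp_mul_div_mul_add {a y : ℝ} (hy : 0 < y) :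
    |b * A / (b * y + A) ^ 2|
        • ((b * y / (b * y + A)) ^ (a - 1) * (1 - b * y / (b * y + A)) ^ (1 - a - 1))
      = b ^ a * A ^ (1 - a) * (y ^ (a - 1) / (b * y + A)) := by
  have hD : 0 < b * y + A := by positivity
  have h1 : 1 - b * y / (b * y + A) = A / (b * y + A) := by field_simp; ring
  rw [smul_eq_mul, abs_of_pos (by positivity), h1, sub_sub_cancel_left,
    div_rpow (by positivity) hD.le, div_rpow hA.le hD.le, mul_rpow hb.le hy.le,
    rpow_sub_one hb.ne', rpow_sub_one hD.ne', rpow_neg hA.le, rpow_neg hD.le, rpow_sub hA,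
    rpow_one]
  field_simp

lemma integrableOn_Ioi_rpow_div_mul_add {a : ℝ} (ha₀ : 0 < a) (ha₁ : a < 1) :
    IntegrableOn (fun y : ℝ => y ^ (a - 1) / (b * y + A)) (Ioi 0) := by
  have h := integrableOn_image_iff_integrableOn_abs_deriv_smul measurableSet_Ioi
    (fun y hy => (hasDerivAt_mul_div_mul_add hb hA hy).hasDerivWithinAt)
    (strictMonoOn_mul_div_mul_add hb hA).injOn (fun t => t ^ (a - 1) * (1 - t) ^ (1 - a - 1))
  rw [image_Ioi_mul_div_mul_add hb hA, integrableOn_congr_fun (fun y (hy : y ∈ Ioi 0) =>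
    abs_deriv_smul_beta_comp_mul_div_mul_add hb hA (a := a) hy) measurableSet_Ioi] at h
  have hc : IsUnit (b ^ a * A ^ (1 - a)) := (by positivity : 0 < b ^ a * A ^ (1 - a)).ne'.isUnit
  exact (integrable_const_mul_iff hc _).1
    (h.1 (integrableOn_Ioo_rpow_mul_one_sub_rpow ha₀ (by linarith)))

lemma integral_Ioi_rpow_div_mul_add {a : ℝ} (ha₀ : 0 < a) (ha₁ : a < 1) :
    ∫ y in Ioi (0 : ℝ), y ^ (a - 1) / (b * y + A) = (A / b) ^ a / A * (π / sin (π * a)) := by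
  have h := integral_image_eq_integral_abs_deriv_smul measurableSet_Ioi
    (fun y hy => (hasDerivAt_mul_div_mul_add hb hA hy).hasDerivWithinAt)
    (strictMonoOn_mul_div_mul_add hb hA).injOn (fun t => t ^ (a - 1) * (1 - t) ^ (1 - a - 1))
  rw [image_Ioi_mul_div_mul_add hb hA, integral_Ioo_rpow_mul_one_sub_rpow_one_sub ha₀ ha₁,
    setIntegral_congr_fun measurableSet_Ioi (fun y (hy : y ∈ Ioi 0) =>
      abs_deriv_smul_beta_comp_mul_div_mul_add hb hA (a := a) hy), integral_const_mul] at h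
  rw [h, div_rpow hA.le hb.le, rpow_sub hA, rpow_one]
  field_simp

end

lemma integrable_comp_abs_of_integrableOn_Ioi {E : Type*} [NormedAddCommGroup E] {f : ℝ → E}
    (hf : IntegrableOn f (Ioi 0)) : Integrable (fun x => f |x|) := by
  have hIoi : IntegrableOn (fun x => f |x|) (Ioi 0) :=
    hf.congr_fun (fun x (hx : 0 < x) => by rw [abs_of_pos hx]) measurableSet_Ioi
  have hIic : IntegrableOn (fun x => f |x|) (Iic 0) := by
    have hneg : MeasurableEmbedding fun x : ℝ => -x := (Homeomorph.neg ℝ).measurableEmbedding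
    rw [← Measure.map_neg_eq_self (volume : Measure ℝ), hneg.integrableOn_map_iff]
    simp_rw [Function.comp_def, abs_neg, neg_preimage, neg_Iic, neg_zero]
    exact (integrableOn_Ici_iff_integrableOn_Ioi).2 hIoi
  rw [← integrableOn_univ, ← Iic_union_Ioi (a := (0 : ℝ))]
  exact hIic.union hIoi

lemma rpow_sub_one_mul_rpow_rpow_div_sub_one {x p : ℝ} (hx : 0 < x) (hp : p ≠ 0) (s : ℝ) :
    x ^ (p - 1) * (x ^ p) ^ (s / p - 1) = x ^ (s - 1) := by
  rw [← rpow_mul hx.le, ← rpow_add hx]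
  congr 1
  field_simp
  ring

section
variable {s p b A : ℝ} (hs : 0 < s) (hsp : s < p) (hb : 0 < b) (hA : 0 < A)
include hs hsp hb hA

lemma integrableOn_Ioi_rpow_div_mul_rpow_add :
    IntegrableOn (fun x : ℝ => x ^ (s - 1) / (b * x ^ p + A)) (Ioi 0) := by
  have hp : p ≠ 0 := (hs.trans hsp).ne'
  have h := (integrableOn_Ioi_comp_rpow_iff' _ hp).2 (integrableOn_Ioi_rpow_div_mul_add hb hA
    (div_pos hs (hs.trans hsp)) ((div_lt_one (hs.trans hsp)).2 hsp))
  refine h.congr_fun (fun x (hx : 0 < x) => ?_) measurableSet_Ioi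
  dsimp only
  rw [smul_eq_mul, ← mul_div_assoc, rpow_sub_one_mul_rpow_rpow_div_sub_one hx hp]

lemma integral_Ioi_rpow_div_mul_rpow_add :
    ∫ x in Ioi (0 : ℝ), x ^ (s - 1) / (b * x ^ p + A)
      = (A / b) ^ (s / p) / A * (π / sin (π * (s / p))) / p := by
  have hp : 0 < p := hs.trans hsp
  have h := integral_comp_rpow_Ioi_of_pos hp (g := fun y => y ^ (s / p - 1) / (b * y + A))
  rw [integral_Ioi_rpow_div_mul_add hb hA (div_pos hs hp) ((div_lt_one hp).2 hsp)] at h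
  rw [← h, eq_div_iff hp.ne', ← integral_mul_const]
  refine setIntegral_congr_fun measurableSet_Ioi fun x (hx : 0 < x) => ?_
  rw [smul_eq_mul, mul_assoc, ← mul_div_assoc, rpow_sub_one_mul_rpow_rpow_div_sub_one hx hp.ne']
  ring

lemma integrable_rpow_abs_div_mul_rpow_abs_add :
    Integrable (fun k : ℝ => |k| ^ (s - 1) / (b * |k| ^ p + A)) :=
  integrable_comp_abs_of_integrableOn_Ioi (integrableOn_Ioi_rpow_div_mul_rpow_add hs hsp hb hA)

lemma integral_rpow_abs_div_mul_rpow_abs_add :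
    ∫ k : ℝ, |k| ^ (s - 1) / (b * |k| ^ p + A)
      = 2 * ((A / b) ^ (s / p) / A * (π / sin (π * (s / p))) / p) := by
  rw [integral_comp_abs (f := fun y => y ^ (s - 1) / (b * y ^ p + A)),
    integral_Ioi_rpow_div_mul_rpow_add hs hsp hb hA]

end

lemma integrableOn_Ioi_sin_sq_div_rpow {θ : ℝ} (h1 : 1 < θ) (h3 : θ < 3) :
    IntegrableOn (fun y : ℝ => sin y ^ 2 / y ^ θ) (Ioi 0) := by
  have hcont : ContinuousOn (fun y : ℝ => sin y ^ 2 / y ^ θ) (Ioi 0) :=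
    (by fun_prop : Continuous fun y => sin y ^ 2).continuousOn.div
      (continuousOn_id.rpow_const fun y hy => Or.inl (ne_of_gt hy))
      fun y hy => (rpow_pos_of_pos hy θ).ne'
  have hnorm : ∀ y : ℝ, 0 < y → ‖sin y ^ 2 / y ^ θ‖ = sin y ^ 2 / y ^ θ := fun y hy =>
    Real.norm_of_nonneg (div_nonneg (sq_nonneg _) (rpow_pos_of_pos hy θ).le)
  rw [← Ioc_union_Ioi_eq_Ioi zero_le_one]
  refine IntegrableOn.union ?_ ?_
  · refine (intervalIntegral.intervalIntegrable_rpow' (a := 0) (b := 1) (r := 2 - θ)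
      (by linarith)).1.mono' ((hcont.mono Ioc_subset_Ioi_self).aestronglyMeasurable
      measurableSet_Ioc) (ae_restrict_of_forall_mem measurableSet_Ioc fun y hy => ?_)
    rw [hnorm y hy.1, rpow_sub hy.1, rpow_two]
    exact div_le_div_of_nonneg_right sin_sq_le_sq (rpow_pos_of_pos hy.1 θ).le
  · refine (integrableOn_Ioi_rpow_of_lt (by linarith : -θ < -1) zero_lt_one).mono'
      ((hcont.mono (Ioi_subset_Ioi zero_le_one)).aestronglyMeasurable measurableSet_Ioi)
      (ae_restrict_of_forall_mem measurableSet_Ioi fun y (hy : 1 < y) => ?_)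
    rw [hnorm y (zero_lt_one.trans hy), rpow_neg (zero_lt_one.trans hy).le, ← one_div]
    exact div_le_div_of_nonneg_right (sin_sq_le_one y)
      (rpow_pos_of_pos (zero_lt_one.trans hy) θ).le

lemma Cθ_pos {θ : ℝ} (h1 : 1 < θ) (h3 : θ ≤ 3) : 0 < Cθ θ := by
  rcases h3.lt_or_eq with h3 | rfl
  · have hI : 0 < ∫ y in Ioi (0 : ℝ), sin y ^ 2 / y ^ θ := by
      rw [setIntegral_pos_iff_support_of_nonneg_ae
        (ae_restrict_of_forall_mem measurableSet_Ioi fun y (hy : 0 < y) => by positivity)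
        (integrableOn_Ioi_sin_sq_div_rpow h1 h3)]
      have hsupp : Ioo 0 π ⊆ Function.support (fun y : ℝ => sin y ^ 2 / y ^ θ) ∩ Ioi 0 :=
        fun y hy => ⟨(div_pos (pow_pos (sin_pos_of_pos_of_lt_pi hy.1 hy.2) 2)
          (rpow_pos_of_pos hy.1 θ)).ne', hy.1⟩
      exact (measure_mono hsupp).trans_lt' (by simp [pi_pos])
    rw [Cθ, if_pos h3]
    positivity
  · rw [Cθ, if_neg (lt_irrefl 3)]
    positivity

theorem stmt15 (θ : ℝ) (hθ1 : 2 < θ) (hθ2 : θ ≤ 3) :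
    Integrable (fun k : ℝ =>
      12 * π ^ 2 * (θ - 1) ^ 2 * Cθ θ * k ^ 2
        / (576 * π ^ 4 * |k| ^ (7 - θ) + (θ - 1) ^ 2 * Cθ θ)) ∧
    (∫ k : ℝ, 12 * π ^ 2 * (θ - 1) ^ 2 * Cθ θ * k ^ 2
        / (576 * π ^ 4 * |k| ^ (7 - θ) + (θ - 1) ^ 2 * Cθ θ)) =
      (24 * π ^ 3 / (7 - θ)) * (1 / Real.sin ((4 - θ) * π / (7 - θ)))
        * ((θ - 1) / (24 * π ^ 2)) ^ (6 / (7 - θ)) * Cθ θ ^ (3 / (7 - θ)) := by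
  have hC : 0 < Cθ θ := Cθ_pos (by linarith) hθ2
  have hu : 0 < (θ - 1) / (24 * π ^ 2) := div_pos (by linarith) (by positivity)
  have h3p : (3 : ℝ) < 7 - θ := by linarith
  set p := 7 - θ
  set A := (θ - 1) ^ 2 * Cθ θ
  set b := 576 * π ^ 4
  have hA : 0 < A := mul_pos (pow_pos (by linarith) 2) hC
  have hb : 0 < b := by positivity
  have hfun : ∀ k : ℝ, 12 * π ^ 2 * (θ - 1) ^ 2 * Cθ θ * k ^ 2 / (b * |k| ^ p + A)
      = 12 * π ^ 2 * A * (|k| ^ ((3 : ℝ) - 1) / (b * |k| ^ p + A)) := fun k => by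
    rw [show (3 : ℝ) - 1 = 2 by norm_num, rpow_two, sq_abs]
    ring
  have hAb : (A / b) ^ (3 / p) = ((θ - 1) / (24 * π ^ 2)) ^ (6 / p) * Cθ θ ^ (3 / p) := by
    rw [show A / b = ((θ - 1) / (24 * π ^ 2)) ^ (2 : ℝ) * Cθ θ by rw [rpow_two]; ring,
      mul_rpow (by positivity) hC.le, ← rpow_mul hu.le]
    ring_nf
  have hsin : sin ((4 - θ) * π / p) = sin (π * (3 / p)) := by
    rw [← sin_pi_sub]
    congr 1
    field_simp
    ring
  simp_rw [hfun]
  refine ⟨(integrable_rpow_abs_div_mul_rpow_abs_add three_pos h3p hb hA).const_mul _, ?_⟩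
  rw [integral_const_mul, integral_rpow_abs_div_mul_rpow_abs_add three_pos h3p hb hA, hAb, hsin]
  field_simp
  ring
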